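/- arXiv:1001.3644 — 3 statements merged into one kernel-verified Lean document; each statement's English description precedes it below -/
import Mathlib

section
/- Let π : L∞(F) → L∞(G) be regular with π(0)=0 and ξ' ≥ 0 in L¹(F), and R(Y, ξ') := ess inf { π(ξ) : E[ξ'ξ|G] ≥_μ Y }. Then R(·, ξ') is quasi-affine: for all Y₁, Y₂ ∈ L∞(G) and G-measurable Λ with 0 ≤ Λ ≤ 1, R(ΛY₁ + (1−Λ)Y₂, ξ') ≥ R(Y₁,ξ') ∧ R(Y₂,ξ') and R(ΛY₁ + (1−Λ)Y₂, ξ') ≤ R(Y₁,ξ') ∨ R(Y₂,ξ'). -/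
open MeasureTheory Filter Set

noncomputable section

/-- `X` is a bounded `F`-measurable random variable (an element of `L∞(F)`). -/
def IsBddMeas {Ω : Type*} (F : MeasurableSpace Ω) (X : Ω → ℝ) : Prop :=
  Measurable[F] X ∧ ∃ C : ℝ, ∀ ω, |X ω| ≤ C

/-- Regularity (REG) of the conditional map `π` with respect to the
sub-σ-algebra `m`: `π (X 1_A + Y 1_{Aᶜ}) = π X 1_A + π Y 1_{Aᶜ}` a.s. -/
def Regular {Ω : Type*} (F m : MeasurableSpace Ω) (μ : @Measure Ω F)
    (π : (Ω → ℝ) → Ω → ℝ) : Prop :=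
  ∀ X Y : Ω → ℝ, IsBddMeas F X → IsBddMeas F Y → ∀ A : Set Ω, MeasurableSet[m] A →
    π (A.indicator X + Aᶜ.indicator Y) =ᵐ[μ] A.indicator (π X) + Aᶜ.indicator (π Y)

/-- `I` is an essential infimum (in the `μ`-a.e. pointwise order) of the set
`S` of random variables. -/
def IsEssInf {Ω : Type*} {F : MeasurableSpace Ω} (μ : @Measure Ω F)
    (S : Set (Ω → ℝ)) (I : Ω → ℝ) : Prop :=
  (∀ f ∈ S, I ≤ᵐ[μ] f) ∧ ∀ g : Ω → ℝ, (∀ f ∈ S, g ≤ᵐ[μ] f) → g ≤ᵐ[μ] I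

/-- `I` is an essential supremum (in the `μ`-a.e. pointwise order) of the set
`S` of random variables. -/
def IsEssSup {Ω : Type*} {F : MeasurableSpace Ω} (μ : @Measure Ω F)
    (S : Set (Ω → ℝ)) (I : Ω → ℝ) : Prop :=
  (∀ f ∈ S, f ≤ᵐ[μ] I) ∧ ∀ g : Ω → ℝ, (∀ f ∈ S, f ≤ᵐ[μ] g) → I ≤ᵐ[μ] g

/-!
Regularity of `π` lets one paste two acceptable positions along a `G`-measurable set `A`, so
`R(·, ξ')` is local and monotone: if `Y ≤ Y'` on `A`, then `R(Y, ξ') ≤ R(Y', ξ')` on `A`.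
On `A = {Y₁ ≤ Y₂}` the mixture `ΛY₁ + (1 − Λ)Y₂` lies between `Y₁` and `Y₂`, and on `Aᶜ` between
`Y₂` and `Y₁`; hence on each piece its risk lies between `R(Y₁, ξ')` and `R(Y₂, ξ')`.
-/

section Pasting

variable {Ω : Type*} {m m₀ : MeasurableSpace Ω} {μ : Measure[m₀] Ω}

lemma IsEssInf.nonempty [NeZero μ] {S : Set (Ω → ℝ)} {I : Ω → ℝ} (hI : IsEssInf μ S I) :
    S.Nonempty := by
  rw [nonempty_iff_ne_empty]
  rintro rfl
  obtain ⟨ω, hω⟩ := (hI.2 (I + 1) (by simp)).exists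
  norm_num at hω

lemma IsEssInf.ae_le_on {S : Set (Ω → ℝ)} {I g : Ω → ℝ} {A : Set Ω} (hI : IsEssInf μ S I)
    (hg : ∀ f ∈ S, ∀ᵐ ω ∂μ, ω ∈ A → g ω ≤ f ω) : ∀ᵐ ω ∂μ, ω ∈ A → g ω ≤ I ω := by
  have key : A.indicator g + Aᶜ.indicator I ≤ᵐ[μ] I := hI.2 _ fun f hf => by
    filter_upwards [hg f hf, hI.1 f hf] with ω hgf hIf
    by_cases hω : ω ∈ A <;> simp [hω, hgf, hIf]
  filter_upwards [key] with ω h hω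
  simpa [hω] using h

def ClosedUnderPasting (m : MeasurableSpace Ω) (μ : Measure[m₀] Ω)
    (S : (Ω → ℝ) → Set (Ω → ℝ)) : Prop :=
  ∀ A, MeasurableSet[m] A → ∀ ⦃Y Y' f g : Ω → ℝ⦄, (∀ᵐ ω ∂μ, ω ∈ A → Y ω ≤ Y' ω) →
    f ∈ S Y' → g ∈ S Y → ∃ h ∈ S Y, h =ᵐ[μ] A.indicator f + Aᶜ.indicator g

namespace ClosedUnderPasting

variable [NeZero μ] {S : (Ω → ℝ) → Set (Ω → ℝ)} (hS : ClosedUnderPasting m μ S)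
include hS

theorem ae_le_on {A : Set Ω} (hA : MeasurableSet[m] A) {Y Y' R R' : Ω → ℝ}
    (hR : IsEssInf μ (S Y) R) (hR' : IsEssInf μ (S Y') R')
    (hYY' : ∀ᵐ ω ∂μ, ω ∈ A → Y ω ≤ Y' ω) : ∀ᵐ ω ∂μ, ω ∈ A → R ω ≤ R' ω := by
  obtain ⟨g, hg⟩ := hR.nonempty
  refine hR'.ae_le_on fun f hf => ?_
  obtain ⟨h, hh, hh_eq⟩ := hS A hA hYY' hf hg
  filter_upwards [hR.1 h hh, hh_eq] with ω hRh hω_eq hω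
  simpa [hω_eq, hω] using hRh

theorem ae_min_le_and_le_max {Y₁ Y₂ Y R₁ R₂ R : Ω → ℝ}
    (hY₁ : Measurable[m] Y₁) (hY₂ : Measurable[m] Y₂)
    (hmin : ∀ ω, min (Y₁ ω) (Y₂ ω) ≤ Y ω) (hmax : ∀ ω, Y ω ≤ max (Y₁ ω) (Y₂ ω))
    (hR₁ : IsEssInf μ (S Y₁) R₁) (hR₂ : IsEssInf μ (S Y₂) R₂) (hR : IsEssInf μ (S Y) R) :
    ((fun ω => min (R₁ ω) (R₂ ω)) ≤ᵐ[μ] R) ∧ (R ≤ᵐ[μ] fun ω => max (R₁ ω) (R₂ ω)) := by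
  set A := {ω | Y₁ ω ≤ Y₂ ω}
  have hA : MeasurableSet[m] A := measurableSet_le hY₁ hY₂
  have hR₁R := hS.ae_le_on hA hR₁ hR <| ae_of_all _ fun ω (hω : Y₁ ω ≤ Y₂ ω) => by
    simpa [hω] using hmin ω
  have hRR₂ := hS.ae_le_on hA hR hR₂ <| ae_of_all _ fun ω (hω : Y₁ ω ≤ Y₂ ω) => by
    simpa [hω] using hmax ω
  have hR₂R := hS.ae_le_on hA.compl hR₂ hR <| ae_of_all _ fun ω (hω : ¬ Y₁ ω ≤ Y₂ ω) => by
    simpa [(not_le.1 hω).le] using hmin ω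
  have hRR₁ := hS.ae_le_on hA.compl hR hR₁ <| ae_of_all _ fun ω (hω : ¬ Y₁ ω ≤ Y₂ ω) => by
    simpa [(not_le.1 hω).le] using hmax ω
  have hboth : ∀ᵐ ω ∂μ, min (R₁ ω) (R₂ ω) ≤ R ω ∧ R ω ≤ max (R₁ ω) (R₂ ω) := by
    filter_upwards [hR₁R, hRR₂, hR₂R, hRR₁] with ω hR₁R hRR₂ hR₂R hRR₁
    by_cases hω : ω ∈ A
    · exact ⟨min_le_of_left_le (hR₁R hω), le_max_of_le_right (hRR₂ hω)⟩
    · exact ⟨min_le_of_right_le (hR₂R hω), le_max_of_le_left (hRR₁ hω)⟩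
  exact ⟨hboth.mono fun _ h => h.1, hboth.mono fun _ h => h.2⟩

end ClosedUnderPasting

end Pasting

section Acceptance

variable {Ω : Type*} {m F : MeasurableSpace Ω} {μ : Measure[F] Ω}

lemma IsBddMeas.indicator_add_compl {X Y : Ω → ℝ} {A : Set Ω} (hX : IsBddMeas F X)
    (hY : IsBddMeas F Y) (hA : MeasurableSet[F] A) :
    IsBddMeas F (A.indicator X + Aᶜ.indicator Y) := by
  obtain ⟨C₁, hC₁⟩ := hX.2
  obtain ⟨C₂, hC₂⟩ := hY.2
  refine ⟨(hX.1.indicator hA).add (hY.1.indicator hA.compl), max C₁ C₂, fun ω => ?_⟩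
  by_cases hω : ω ∈ A
  · simpa [hω] using le_max_of_le_left (hC₁ ω)
  · simpa [hω] using le_max_of_le_right (hC₂ ω)

lemma IsBddMeas.integrable_mul {ξ' ξ : Ω → ℝ} (hξ : IsBddMeas F ξ) (hξ' : Integrable ξ' μ) :
    Integrable (fun ω => ξ' ω * ξ ω) μ :=
  let ⟨_, hC⟩ := hξ.2
  hξ'.mul_bdd hξ.1.aestronglyMeasurable (ae_of_all _ hC)

lemma condExp_indicator_add_compl (hm : m ≤ F) {f g : Ω → ℝ} {A : Set Ω}
    (hA : MeasurableSet[m] A) (hf : Integrable f μ) (hg : Integrable g μ) :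
    μ[A.indicator f + Aᶜ.indicator g|m] =ᵐ[μ] A.indicator (μ[f|m]) + Aᶜ.indicator (μ[g|m]) :=
  (condExp_add (hf.indicator (hm _ hA)) (hg.indicator (hm _ hA.compl)) m).trans
    ((condExp_indicator hf hA).add (condExp_indicator hg hA.compl))

def acceptedValues (μ : Measure[F] Ω) (m : MeasurableSpace Ω) (π : (Ω → ℝ) → Ω → ℝ)
    (ξ' Y : Ω → ℝ) : Set (Ω → ℝ) :=
  {g | ∃ ξ : Ω → ℝ, IsBddMeas F ξ ∧
    (Y ≤ᵐ[μ.withDensity fun ω => ENNReal.ofReal (ξ' ω)] μ[fun ω => ξ' ω * ξ ω|m]) ∧ g = π ξ}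

theorem closedUnderPasting_acceptedValues (hm : m ≤ F) {π : (Ω → ℝ) → Ω → ℝ}
    (hreg : Regular F m μ π) {ξ' : Ω → ℝ} (hξ' : Integrable ξ' μ) :
    ClosedUnderPasting m μ (acceptedValues μ m π ξ') := by
  rintro A hA Y Y' _ _ hYY' ⟨ξ, hξ, hξY', rfl⟩ ⟨η, hη, hηY, rfl⟩
  refine ⟨_, ⟨_, hξ.indicator_add_compl hη (hm _ hA), ?_, rfl⟩, hreg ξ η hξ hη A hA⟩
  have hmul : (fun ω => ξ' ω * (A.indicator ξ + Aᶜ.indicator η) ω) =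
      A.indicator (fun ω => ξ' ω * ξ ω) + Aᶜ.indicator (fun ω => ξ' ω * η ω) := by
    ext ω
    by_cases hω : ω ∈ A <;> simp [hω]
  have hce := condExp_indicator_add_compl hm hA (hξ.integrable_mul hξ') (hη.integrable_mul hξ')
  rw [hmul]
  filter_upwards [hξY', hηY, (withDensity_absolutelyContinuous μ _).ae_le hYY',
    (withDensity_absolutelyContinuous μ _).ae_le hce] with ω hξω hηω hYω hceω
  by_cases hω : ω ∈ A
  · simpa [hceω, hω] using (hYω hω).trans hξω
  · simpa [hceω, hω] using hηω

end Acceptance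

theorem R_quasi_affine_general
    {Ω : Type*} [F : MeasurableSpace Ω] (μ : Measure Ω) [IsProbabilityMeasure μ]
    (m : MeasurableSpace Ω) (hm : m ≤ F)
    (π : (Ω → ℝ) → Ω → ℝ) (hreg : Regular F m μ π)
    (ξ' : Ω → ℝ) (hξ'int : Integrable ξ' μ)
    (Y₁ Y₂ : Ω → ℝ) (hY₁ : IsBddMeas m Y₁) (hY₂ : IsBddMeas m Y₂)
    (Λ : Ω → ℝ) (hΛ : ∀ ω, 0 ≤ Λ ω ∧ Λ ω ≤ 1)
    (R₁ R₂ R₃ : Ω → ℝ)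
    (hR₁ : IsEssInf μ
      {g | ∃ ξ : Ω → ℝ, IsBddMeas F ξ ∧
        (Y₁ ≤ᵐ[μ.withDensity fun ω => ENNReal.ofReal (ξ' ω)]
          μ[fun ω => ξ' ω * ξ ω|m]) ∧ g = π ξ} R₁)
    (hR₂ : IsEssInf μ
      {g | ∃ ξ : Ω → ℝ, IsBddMeas F ξ ∧
        (Y₂ ≤ᵐ[μ.withDensity fun ω => ENNReal.ofReal (ξ' ω)]
          μ[fun ω => ξ' ω * ξ ω|m]) ∧ g = π ξ} R₂)
    (hR₃ : IsEssInf μ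
      {g | ∃ ξ : Ω → ℝ, IsBddMeas F ξ ∧
        ((fun ω => Λ ω * Y₁ ω + (1 - Λ ω) * Y₂ ω)
            ≤ᵐ[μ.withDensity fun ω => ENNReal.ofReal (ξ' ω)]
          μ[fun ω => ξ' ω * ξ ω|m]) ∧ g = π ξ} R₃) :
    ((fun ω => min (R₁ ω) (R₂ ω)) ≤ᵐ[μ] R₃) ∧
    (R₃ ≤ᵐ[μ] fun ω => max (R₁ ω) (R₂ ω)) := by
  have hsum (ω : Ω) : Λ ω + (1 - Λ ω) = 1 := add_sub_cancel _ _
  refine (closedUnderPasting_acceptedValues hm hreg hξ'int).ae_min_le_and_le_max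
    (Y := fun ω => Λ ω * Y₁ ω + (1 - Λ ω) * Y₂ ω) hY₁.1 hY₂.1 (fun ω => ?_) (fun ω => ?_)
    hR₁ hR₂ hR₃
  · exact Convex.min_le_combo _ _ (hΛ ω).1 (sub_nonneg.2 (hΛ ω).2) (hsum ω)
  · exact Convex.combo_le_max _ _ (hΛ ω).1 (sub_nonneg.2 (hΛ ω).2) (hsum ω)

/-- `R(·, ξ')` is quasi-affine in `Y`: for `G`-measurable `Λ` with `0 ≤ Λ ≤ 1`,
`R(Y₁,ξ') ∧ R(Y₂,ξ') ≤ R(ΛY₁ + (1−Λ)Y₂, ξ') ≤ R(Y₁,ξ') ∨ R(Y₂,ξ')`. -/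
theorem R_quasi_affine
    {Ω : Type*} [F : MeasurableSpace Ω] (μ : Measure Ω) [IsProbabilityMeasure μ]
    (m : MeasurableSpace Ω) (hm : m ≤ F)
    (π : (Ω → ℝ) → Ω → ℝ) (hreg : Regular F m μ π)
    (hπ0 : π 0 =ᵐ[μ] 0)
    (ξ' : Ω → ℝ) (hξ'pos : 0 ≤ ξ') (hξ'int : Integrable ξ' μ)
    (Y₁ Y₂ : Ω → ℝ) (hY₁ : IsBddMeas m Y₁) (hY₂ : IsBddMeas m Y₂)
    (Λ : Ω → ℝ) (hΛm : Measurable[m] Λ) (hΛ : ∀ ω, 0 ≤ Λ ω ∧ Λ ω ≤ 1)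
    (R₁ R₂ R₃ : Ω → ℝ)
    (hR₁ : IsEssInf μ
      {g | ∃ ξ : Ω → ℝ, IsBddMeas F ξ ∧
        (Y₁ ≤ᵐ[μ.withDensity fun ω => ENNReal.ofReal (ξ' ω)]
          μ[fun ω => ξ' ω * ξ ω|m]) ∧ g = π ξ} R₁)
    (hR₂ : IsEssInf μ
      {g | ∃ ξ : Ω → ℝ, IsBddMeas F ξ ∧
        (Y₂ ≤ᵐ[μ.withDensity fun ω => ENNReal.ofReal (ξ' ω)]
          μ[fun ω => ξ' ω * ξ ω|m]) ∧ g = π ξ} R₂)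
    (hR₃ : IsEssInf μ
      {g | ∃ ξ : Ω → ℝ, IsBddMeas F ξ ∧
        ((fun ω => Λ ω * Y₁ ω + (1 - Λ ω) * Y₂ ω)
            ≤ᵐ[μ.withDensity fun ω => ENNReal.ofReal (ξ' ω)]
          μ[fun ω => ξ' ω * ξ ω|m]) ∧ g = π ξ} R₃) :
    ((fun ω => min (R₁ ω) (R₂ ω)) ≤ᵐ[μ] R₃) ∧
    (R₃ ≤ᵐ[μ] fun ω => max (R₁ ω) (R₂ ω)) :=
  R_quasi_affine_general (F := F) μ m hm π hreg ξ' hξ'int Y₁ Y₂ hY₁ hY₂ Λ hΛ R₁ R₂ R₃ hR₁ hR₂ hR₃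
end
end

section
/- Let π : L∞(F) → L∞(G) be regular, and fix at most countably many finite G-measurable partitions {Γ(h)} and Q ≪ P. Then there exists a single sequence {ξ_m} ⊂ L∞(F) with E_Q[ξ_m|G] ≥_Q E_Q[X|G] for all m, π(ξ_m) ↓ K(X,Q), and simultaneously π^{Γ(h)}(ξ_m) ↓ K^{Γ(h)}(X,Q) as m → ∞, for every h. -/
/-!
Regularity makes the constraint set directed downward: pasting `ξ₁` and `ξ₂` along the
`m`-measurable set `{π ξ₁ ≤ π ξ₂}` gives an admissible position whose image under `π` is
`min (π ξ₁) (π ξ₂)`, and each `π^Γ` is monotone in `π`. In a directed family an essential infimum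
is the a.e. limit of a sequence from the family: minimize the bounded, strictly monotone functional
`f ↦ ∫ arctan f`, make the near-minimizers decreasing by pasting, and note that the limit `G` is a
lower bound of the family because `∫ arctan (min G p) ≥ ∫ arctan G` forces `G ≤ p`. Finally, one
sequence serves all objectives at once: enumerate the minimizing sequences for `K` and for every
`K^{Γ(h)}` in a single list and paste each entry with the previous term, so that the result
decreases and eventually lies below every entry of every minimizing sequence.
-/

open MeasureTheory Filter Set

noncomputable section

/-- A finite partition of `Ω` into `m`-measurable sets. -/
def IsPartition {Ω : Type*} (m : MeasurableSpace Ω) (Γ : Finset (Set Ω)) : Prop :=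
  (∀ A ∈ Γ, MeasurableSet[m] A) ∧
  ((Γ : Set (Set Ω)).PairwiseDisjoint id) ∧
  ⋃₀ (Γ : Set (Set Ω)) = Set.univ

/-- The step approximation `f^Γ = ∑_{A ∈ Γ} (ess sup_A f) 1_A` of a random
variable `f` along a finite partition `Γ`. -/
def partApprox {Ω : Type*} {F : MeasurableSpace Ω} (μ : @Measure Ω F)
    (Γ : Finset (Set Ω)) (f : Ω → ℝ) : Ω → ℝ :=
  fun ω => ∑ A ∈ Γ, A.indicator (fun _ => essSup f (μ.restrict A)) ω

theorem DirectedOn.exists_seq_chain {α : Type*} {r : α → α → Prop} {s : Set α}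
    (hs : DirectedOn r s) {f : ℕ → α} (hf : ∀ n, f n ∈ s) :
    ∃ g : ℕ → α, (∀ n, g n ∈ s) ∧ (∀ n, r (g n) (g (n + 1))) ∧ ∀ n, r (f n) (g n) := by
  choose! up hup_mem hup_left hup_right using hs
  let g : ℕ → α := fun n => Nat.rec (up (f 0) (f 0)) (fun n gn => up gn (f (n + 1))) n
  have hg : ∀ n, g n ∈ s := by
    intro n
    induction n with
    | zero => exact hup_mem _ (hf 0) _ (hf 0)
    | succ n ih => exact hup_mem _ ih _ (hf _)
  refine ⟨g, hg, fun n => hup_left _ (hg n) _ (hf _), ?_⟩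
  rintro (_ | n)
  · exact hup_left _ (hf 0) _ (hf 0)
  · exact hup_right _ (hg n) _ (hf _)

theorem Antitone.tendsto_of_forall_le_of_exists_le {α : Type*} [LinearOrder α]
    [TopologicalSpace α] [OrderTopology α] {u v : ℕ → α} {L : α} (hu : Antitone u)
    (hL : ∀ k, L ≤ u k) (hv : Tendsto v atTop (nhds L)) (huv : ∀ n, ∃ k, u k ≤ v n) :
    Tendsto u atTop (nhds L) := by
  refine tendsto_order.2 ⟨fun a ha => Eventually.of_forall fun k => ha.trans_le (hL k),
    fun a ha => ?_⟩
  obtain ⟨n, hn⟩ := (hv.eventually (gt_mem_nhds ha)).exists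
  obtain ⟨k, hk⟩ := huv n
  exact eventually_atTop.2 ⟨k, fun j hj => (hu hj).trans_lt (hk.trans_lt hn)⟩

section ArctanIntegral

open Real

variable {Ω : Type*} {mΩ : MeasurableSpace Ω} {μ : Measure Ω} [IsFiniteMeasure μ]

lemma abs_arctan_le_pi_div_two (x : ℝ) : |arctan x| ≤ π / 2 :=
  abs_le.2 ⟨(neg_pi_div_two_lt_arctan x).le, (arctan_lt_pi_div_two x).le⟩

lemma integrable_arctan_comp {f : Ω → ℝ} (hf : AEMeasurable f μ) :
    Integrable (fun ω => arctan (f ω)) μ :=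
  (integrable_const (π / 2)).mono' (measurable_arctan.comp_aemeasurable hf).aestronglyMeasurable
    (Eventually.of_forall fun ω => abs_arctan_le_pi_div_two (f ω))

lemma bddBelow_range_integral_arctan :
    BddBelow (range fun f : Ω → ℝ => ∫ ω, arctan (f ω) ∂μ) := by
  refine ⟨-(π / 2 * μ.real univ), forall_mem_range.2 fun f => ?_⟩
  exact neg_le_of_abs_le (norm_integral_le_of_norm_le_const (f := fun ω => arctan (f ω))
    (Eventually.of_forall fun ω => abs_arctan_le_pi_div_two (f ω)))

lemma tendsto_integral_arctan_comp {f : ℕ → Ω → ℝ} {g : Ω → ℝ} (hf : ∀ n, AEMeasurable (f n) μ)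
    (hfg : ∀ᵐ ω ∂μ, Tendsto (fun n => f n ω) atTop (nhds (g ω))) :
    Tendsto (fun n => ∫ ω, arctan (f n ω) ∂μ) atTop (nhds (∫ ω, arctan (g ω) ∂μ)) :=
  tendsto_integral_of_dominated_convergence (fun _ => π / 2)
    (fun n => (integrable_arctan_comp (hf n)).aestronglyMeasurable) (integrable_const _)
    (fun n => Eventually.of_forall fun ω => abs_arctan_le_pi_div_two (f n ω))
    (hfg.mono fun _ h => (continuous_arctan.tendsto _).comp h)

lemma ae_le_of_integral_arctan_le_min {f g : Ω → ℝ} (hf : AEMeasurable f μ)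
    (hg : AEMeasurable g μ)
    (h : ∫ ω, arctan (f ω) ∂μ ≤ ∫ ω, arctan (min (f ω) (g ω)) ∂μ) : f ≤ᵐ[μ] g := by
  have hle : (fun ω => arctan (min (f ω) (g ω))) ≤ᵐ[μ] fun ω => arctan (f ω) :=
    Eventually.of_forall fun ω => arctan_strictMono.monotone (min_le_left _ _)
  have hint := integrable_arctan_comp (hf.min hg)
  have heq := (integral_eq_iff_of_ae_le hint (integrable_arctan_comp hf) hle).1
    ((integral_mono_ae hint (integrable_arctan_comp hf) hle).antisymm h)
  filter_upwards [heq] with ω hω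
  exact min_eq_left_iff.1 (arctan_injective hω)

variable {S : Set (Ω → ℝ)}

lemma exists_antitone_seq_tendsto_sInf_integral_arctan (hne : S.Nonempty)
    (hmeas : ∀ f ∈ S, AEMeasurable f μ) (hdir : DirectedOn (fun f g => g ≤ᵐ[μ] f) S) :
    ∃ g : ℕ → Ω → ℝ, (∀ n, g n ∈ S) ∧ (∀ n, g (n + 1) ≤ᵐ[μ] g n) ∧
      Tendsto (fun n => ∫ ω, arctan (g n ω) ∂μ) atTop
        (nhds (sInf ((fun f => ∫ ω, arctan (f ω) ∂μ) '' S))) := by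
  set Φ : (Ω → ℝ) → ℝ := fun f => ∫ ω, arctan (f ω) ∂μ
  have hbdd : BddBelow (Φ '' S) := bddBelow_range_integral_arctan.mono (image_subset_range _ _)
  have hnear : ∀ n : ℕ, ∃ f ∈ S, Φ f < sInf (Φ '' S) + 1 / (n + 1) := fun n => by
    obtain ⟨_, ⟨f, hf, rfl⟩, hlt⟩ :=
      exists_lt_of_csInf_lt (hne.image Φ) (lt_add_of_pos_right _ Nat.one_div_pos_of_nat)
    exact ⟨f, hf, hlt⟩
  choose f hfS hfΦ using hnear
  obtain ⟨g, hgS, hg_succ, hgf⟩ := hdir.exists_seq_chain hfS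
  have hupper : Tendsto (fun n : ℕ => sInf (Φ '' S) + 1 / ((n : ℝ) + 1)) atTop
      (nhds (sInf (Φ '' S))) := by
    simpa using tendsto_one_div_add_atTop_nhds_zero_nat.const_add (sInf (Φ '' S))
  refine ⟨g, hgS, hg_succ, tendsto_of_tendsto_of_tendsto_of_le_of_le tendsto_const_nhds hupper
    (fun n => csInf_le hbdd (mem_image_of_mem Φ (hgS n))) fun n => ?_⟩
  refine (lt_of_le_of_lt ?_ (hfΦ n)).le
  exact integral_mono_ae (integrable_arctan_comp (hmeas _ (hgS n)))
    (integrable_arctan_comp (hmeas _ (hfS n)))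
    ((hgf n).mono fun _ h => arctan_strictMono.monotone h)

lemma sInf_integral_arctan_le_min (hmeas : ∀ f ∈ S, AEMeasurable f μ)
    (hdir : DirectedOn (fun f g => g ≤ᵐ[μ] f) S) {g : ℕ → Ω → ℝ} {G : Ω → ℝ}
    (hgS : ∀ n, g n ∈ S) (hgG : ∀ᵐ ω ∂μ, Tendsto (fun n => g n ω) atTop (nhds (G ω)))
    {p : Ω → ℝ} (hp : p ∈ S) :
    sInf ((fun f => ∫ ω, arctan (f ω) ∂μ) '' S) ≤ ∫ ω, arctan (min (G ω) (p ω)) ∂μ := by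
  have hmin_meas : ∀ n, AEMeasurable (fun ω => min (g n ω) (p ω)) μ :=
    fun n => (hmeas _ (hgS n)).min (hmeas p hp)
  refine ge_of_tendsto (tendsto_integral_arctan_comp hmin_meas
    (hgG.mono fun _ h => h.min tendsto_const_nhds)) (Eventually.of_forall fun n => ?_)
  obtain ⟨q, hqS, hqg, hqp⟩ := hdir _ (hgS n) p hp
  refine (csInf_le (bddBelow_range_integral_arctan.mono (image_subset_range _ _))
    (mem_image_of_mem _ hqS)).trans ?_
  refine integral_mono_ae (integrable_arctan_comp (hmeas q hqS)) (integrable_arctan_comp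
    (hmin_meas n)) ?_
  filter_upwards [hqg, hqp] with ω h₁ h₂
  exact arctan_strictMono.monotone (le_min h₁ h₂)

theorem exists_seq_tendsto_ae_of_isEssInf {I : Ω → ℝ} (hne : S.Nonempty)
    (hmeas : ∀ f ∈ S, AEMeasurable f μ) (hdir : DirectedOn (fun f g => g ≤ᵐ[μ] f) S)
    (hI : IsEssInf μ S I) :
    ∃ u : ℕ → Ω → ℝ, (∀ n, u n ∈ S) ∧ ∀ᵐ ω ∂μ, Tendsto (fun n => u n ω) atTop (nhds (I ω)) := by
  obtain ⟨g, hgS, hg_succ, hgΦ⟩ := exists_antitone_seq_tendsto_sInf_integral_arctan hne hmeas hdir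
  have hIg : ∀ᵐ ω ∂μ, ∀ n, I ω ≤ g n ω ∧ g (n + 1) ω ≤ g n ω :=
    ae_all_iff.2 fun n => (hI.1 _ (hgS n)).and (hg_succ n)
  set G : Ω → ℝ := fun ω => ⨅ n, g n ω
  have hgG : ∀ᵐ ω ∂μ, Tendsto (fun n => g n ω) atTop (nhds (G ω)) := by
    filter_upwards [hIg] with ω hω
    exact tendsto_atTop_ciInf (antitone_nat_of_succ_le fun n => (hω n).2)
      ⟨I ω, forall_mem_range.2 fun n => (hω n).1⟩
  have hG : AEMeasurable G μ :=
    aemeasurable_of_tendsto_metrizable_ae atTop (fun n => hmeas _ (hgS n)) hgG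
  have hΦG := tendsto_nhds_unique (tendsto_integral_arctan_comp (fun n => hmeas _ (hgS n)) hgG) hgΦ
  have hG_lb : ∀ p ∈ S, G ≤ᵐ[μ] p := fun p hp => ae_le_of_integral_arctan_le_min hG (hmeas p hp)
    (hΦG ▸ sInf_integral_arctan_le_min hmeas hdir hgS hgG hp)
  have hGI : G =ᵐ[μ] I := (hI.2 G hG_lb).antisymm (hIg.mono fun ω hω => le_ciInf fun n => (hω n).1)
  refine ⟨g, hgS, ?_⟩
  filter_upwards [hgG, hGI] with ω hω hGω
  rwa [← hGω]

end ArctanIntegral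

theorem exists_seq_antitone_tendsto_of_isEssInf {Ω α ι : Type*} {mΩ : MeasurableSpace Ω}
    {μ : Measure Ω} [IsFiniteMeasure μ] [Countable ι] {r : α → α → Prop} {A : Set α}
    (hA : A.Nonempty) (hdir : DirectedOn r A) (ψ : ι → α → Ω → ℝ)
    (hψ_mono : ∀ i, ∀ a ∈ A, ∀ b ∈ A, r a b → ψ i b ≤ᵐ[μ] ψ i a)
    (hψ_meas : ∀ i, ∀ a ∈ A, AEMeasurable (ψ i a) μ) {J : ι → Ω → ℝ}
    (hJ : ∀ i, IsEssInf μ (ψ i '' A) (J i)) :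
    ∃ ξ : ℕ → α, (∀ k, ξ k ∈ A) ∧ ∀ i, ∀ᵐ ω ∂μ,
      Antitone (fun k => ψ i (ξ k) ω) ∧ Tendsto (fun k => ψ i (ξ k) ω) atTop (nhds (J i ω)) := by
  have hmin : ∀ i, ∃ a : ℕ → α, (∀ n, a n ∈ A) ∧
      ∀ᵐ ω ∂μ, Tendsto (fun n => ψ i (a n) ω) atTop (nhds (J i ω)) := fun i => by
    obtain ⟨u, hu, hconv⟩ := exists_seq_tendsto_ae_of_isEssInf (hA.image (ψ i))
      (forall_mem_image.2 (hψ_meas i))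
      (directedOn_image.2 (hdir.mono' fun a ha b hb hab => hψ_mono i a ha b hb hab)) (hJ i)
    choose a haA hau using hu
    exact ⟨a, haA, by simpa only [hau] using hconv⟩
  choose a haA hconv using hmin
  obtain ⟨a₀, ha₀⟩ := hA
  obtain ⟨f, hf⟩ : ∃ f : ℕ → α, insert a₀ (range (Function.uncurry a)) = range f :=
    ((countable_range _).insert a₀).exists_eq_range (insert_nonempty _ _)
  have hfA : ∀ k, f k ∈ A := forall_mem_range.1 <| hf ▸
    insert_subset ha₀ (range_subset_iff.2 fun p => haA p.1 p.2)
  obtain ⟨ξ, hξA, hξ_succ, hξf⟩ := hdir.exists_seq_chain hfA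
  refine ⟨ξ, hξA, fun i => ?_⟩
  have hdiag : ∀ n, ∃ k, f k = a i n := fun n =>
    hf.subset (mem_insert_of_mem _ (mem_range_self (i, n)))
  filter_upwards [hconv i, ae_all_iff.2 fun k => (hJ i).1 _ (mem_image_of_mem _ (hξA k)),
    ae_all_iff.2 fun k => hψ_mono i _ (hξA k) _ (hξA (k + 1)) (hξ_succ k),
    ae_all_iff.2 fun k => hψ_mono i _ (hfA k) _ (hξA k) (hξf k)] with ω hω hJω hsuccω hfω
  have hanti : Antitone fun k => ψ i (ξ k) ω := antitone_nat_of_succ_le hsuccω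
  refine ⟨hanti, hanti.tendsto_of_forall_le_of_exists_le hJω hω fun n => ?_⟩
  obtain ⟨k, hk⟩ := hdiag n
  exact ⟨k, hk ▸ hfω k⟩

lemma essSup_mono_ae_of_bddBelow_of_bddAbove {Ω : Type*} {mΩ : MeasurableSpace Ω} {ν : Measure Ω}
    {f g : Ω → ℝ} (h : f ≤ᵐ[ν] g) (hf : BddBelow (range f)) (hg : BddAbove (range g)) :
    essSup f ν ≤ essSup g ν := by
  rcases eq_zero_or_neZero ν with rfl | hν
  · simp [essSup, limsup, limsSup]
  · exact essSup_mono_ae h hf.isBoundedUnder_of_range.isCoboundedUnder_flip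
      hg.isBoundedUnder_of_range

lemma partApprox_mono {Ω : Type*} {mΩ : MeasurableSpace Ω} (μ : Measure Ω) (Γ : Finset (Set Ω))
    {f g : Ω → ℝ} (h : f ≤ᵐ[μ] g) (hf : BddBelow (range f)) (hg : BddAbove (range g)) :
    partApprox μ Γ f ≤ partApprox μ Γ g := fun _ =>
  Finset.sum_le_sum fun _ _ => indicator_le_indicator
    (essSup_mono_ae_of_bddBelow_of_bddAbove (ae_restrict_of_ae h) hf hg)

lemma measurable_partApprox {Ω : Type*} {mΩ : MeasurableSpace Ω} (μ : Measure Ω)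
    {Γ : Finset (Set Ω)} (hΓ : ∀ A ∈ Γ, MeasurableSet A) (f : Ω → ℝ) :
    Measurable (partApprox μ Γ f) :=
  Finset.measurable_sum _ fun A hA => measurable_const.indicator (hΓ A hA)

lemma IsBddMeas.isBounded_range {Ω : Type*} {m : MeasurableSpace Ω} {f : Ω → ℝ}
    (hf : IsBddMeas m f) : Bornology.IsBounded (range f) := by
  obtain ⟨C, hC⟩ := hf.2
  refine isBounded_iff_forall_norm_le.2 ⟨C, ?_⟩
  rintro _ ⟨ω, rfl⟩
  exact hC ω

section Admissible

variable {Ω : Type*} {F : MeasurableSpace Ω}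

lemma IsBddMeas.integrable {ξ : Ω → ℝ} (hξ : IsBddMeas F ξ) (Q : @Measure Ω F) [IsFiniteMeasure Q] :
    Integrable ξ Q := by
  obtain ⟨C, hC⟩ := hξ.2
  exact (integrable_const C).mono' hξ.1.aestronglyMeasurable (Eventually.of_forall hC)

lemma IsBddMeas.piecewise {ξ₁ ξ₂ : Ω → ℝ} (h₁ : IsBddMeas F ξ₁) (h₂ : IsBddMeas F ξ₂)
    {A : Set Ω} [DecidablePred (· ∈ A)] (hA : MeasurableSet[F] A) :
    IsBddMeas F (A.piecewise ξ₁ ξ₂) := by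
  obtain ⟨C₁, hC₁⟩ := h₁.2
  obtain ⟨C₂, hC₂⟩ := h₂.2
  refine ⟨h₁.1.piecewise hA h₂.1, max C₁ C₂, fun ω => ?_⟩
  by_cases hω : ω ∈ A
  · simpa [hω] using (hC₁ ω).trans (le_max_left _ _)
  · simpa [hω] using (hC₂ ω).trans (le_max_right _ _)

def admissible (m : MeasurableSpace Ω) (Q : @Measure Ω F) (X : Ω → ℝ) : Set (Ω → ℝ) :=
  {ξ | IsBddMeas F ξ ∧ Q[X|m] ≤ᵐ[Q] Q[ξ|m]}

lemma image_admissible (m : MeasurableSpace Ω) (Q : @Measure Ω F) (X : Ω → ℝ)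
    (f : (Ω → ℝ) → Ω → ℝ) :
    f '' admissible m Q X = {g | ∃ ξ, IsBddMeas F ξ ∧ (Q[X|m] ≤ᵐ[Q] Q[ξ|m]) ∧ g = f ξ} := by
  ext g
  simp only [admissible, mem_image, mem_ofPred_eq, and_assoc, eq_comm]

variable {m : MeasurableSpace Ω} {Q : @Measure Ω F} [IsFiniteMeasure Q] {X : Ω → ℝ}

lemma piecewise_mem_admissible (hm : m ≤ F) {ξ₁ ξ₂ : Ω → ℝ} (h₁ : ξ₁ ∈ admissible m Q X)
    (h₂ : ξ₂ ∈ admissible m Q X) {A : Set Ω} [DecidablePred (· ∈ A)] (hA : MeasurableSet[m] A) :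
    A.piecewise ξ₁ ξ₂ ∈ admissible m Q X := by
  have hcond : Q[A.piecewise ξ₁ ξ₂|m] =ᵐ[Q] A.piecewise (Q[ξ₁|m]) (Q[ξ₂|m]) := by
    rw [← indicator_add_compl_eq_piecewise, ← indicator_add_compl_eq_piecewise]
    exact (condExp_add ((h₁.1.integrable Q).indicator (hm _ hA))
      ((h₂.1.integrable Q).indicator (hm _ hA.compl)) m).trans
      ((condExp_indicator (h₁.1.integrable Q) hA).add
        (condExp_indicator (h₂.1.integrable Q) hA.compl))
  refine ⟨h₁.1.piecewise h₂.1 (hm _ hA), ?_⟩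
  filter_upwards [hcond, h₁.2, h₂.2] with ω hω hω₁ hω₂
  rw [hω]
  by_cases hωA : ω ∈ A <;> simpa [hωA]

lemma directedOn_admissible (hm : m ≤ F) {μ : @Measure Ω F} {π : (Ω → ℝ) → Ω → ℝ}
    (hreg : Regular F m μ π) (hπbdd : ∀ ξ : Ω → ℝ, IsBddMeas F ξ → IsBddMeas m (π ξ)) :
    DirectedOn (fun ξ₁ ξ₂ => π ξ₂ ≤ᵐ[μ] π ξ₁) (admissible m Q X) := by
  classical
  intro ξ₁ h₁ ξ₂ h₂
  set A : Set Ω := {ω | π ξ₁ ω ≤ π ξ₂ ω}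
  have hA : MeasurableSet[m] A := measurableSet_le (hπbdd ξ₁ h₁.1).1 (hπbdd ξ₂ h₂.1).1
  have hpaste : π (A.piecewise ξ₁ ξ₂) =ᵐ[μ] A.piecewise (π ξ₁) (π ξ₂) := by
    simpa only [indicator_add_compl_eq_piecewise] using hreg ξ₁ ξ₂ h₁.1 h₂.1 A hA
  have hmin : A.piecewise (π ξ₁) (π ξ₂) = π ξ₁ ⊓ π ξ₂ := by
    ext ω
    by_cases hω : π ξ₁ ω ≤ π ξ₂ ω
    · simp [A, hω]
    · simp [A, hω, le_of_not_ge hω]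
  rw [hmin] at hpaste
  exact ⟨A.piecewise ξ₁ ξ₂, piecewise_mem_admissible hm h₁ h₂ hA,
    hpaste.trans_le (.of_forall fun _ => inf_le_left),
    hpaste.trans_le (.of_forall fun _ => inf_le_right)⟩

end Admissible

theorem common_minimizing_sequence_general
    {Ω : Type*} [F : MeasurableSpace Ω] (μ : Measure Ω) [IsProbabilityMeasure μ]
    (m : MeasurableSpace Ω) (hm : m ≤ F)
    (π : (Ω → ℝ) → Ω → ℝ) (hreg : Regular F m μ π)
    (hπbdd : ∀ ξ : Ω → ℝ, IsBddMeas F ξ → IsBddMeas m (π ξ))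
    (Q : @Measure Ω F) [IsProbabilityMeasure Q]
    (X : Ω → ℝ) (hX : IsBddMeas F X)
    (Γ : ℕ → Finset (Set Ω)) (hΓ : ∀ h, IsPartition m (Γ h))
    (K : Ω → ℝ)
    (hK : IsEssInf μ
      {g | ∃ ξ : Ω → ℝ, IsBddMeas F ξ ∧ (Q[X|m] ≤ᵐ[Q] Q[ξ|m]) ∧ g = π ξ} K)
    (KΓ : ℕ → Ω → ℝ)
    (hKΓ : ∀ h : ℕ, IsEssInf μ
      {g | ∃ ξ : Ω → ℝ, IsBddMeas F ξ ∧ (Q[X|m] ≤ᵐ[Q] Q[ξ|m]) ∧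
        g = partApprox μ (Γ h) (π ξ)} (KΓ h)) :
    ∃ ξs : ℕ → Ω → ℝ,
      (∀ k, IsBddMeas F (ξs k) ∧ (Q[X|m] ≤ᵐ[Q] Q[ξs k|m])) ∧
      (∀ᵐ ω ∂μ, Antitone (fun k => π (ξs k) ω) ∧
        Tendsto (fun k => π (ξs k) ω) atTop (nhds (K ω))) ∧
      (∀ h : ℕ, ∀ᵐ ω ∂μ, Antitone (fun k => partApprox μ (Γ h) (π (ξs k)) ω) ∧
        Tendsto (fun k => partApprox μ (Γ h) (π (ξs k)) ω) atTop (nhds (KΓ h ω))) := by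
  let ψ : Option ℕ → (Ω → ℝ) → Ω → ℝ := fun i ξ => i.elim (π ξ) fun h => partApprox μ (Γ h) (π ξ)
  have hψ_mono : ∀ i, ∀ ξ₁ ∈ admissible m Q X, ∀ ξ₂ ∈ admissible m Q X,
      π ξ₂ ≤ᵐ[μ] π ξ₁ → ψ i ξ₂ ≤ᵐ[μ] ψ i ξ₁ := by
    rintro (_ | h) ξ₁ h₁ ξ₂ h₂ hle
    · exact hle
    · exact .of_forall (partApprox_mono μ (Γ h) hle (hπbdd ξ₂ h₂.1).isBounded_range.bddBelow
        (hπbdd ξ₁ h₁.1).isBounded_range.bddAbove)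
  have hψ_meas : ∀ i, ∀ ξ ∈ admissible m Q X, AEMeasurable (ψ i ξ) μ := by
    rintro (_ | h) ξ hξ
    · exact ((hπbdd ξ hξ.1).1.mono hm le_rfl).aemeasurable
    · exact (measurable_partApprox μ (fun A hA => hm _ ((hΓ h).1 A hA)) _).aemeasurable
  have hJ : ∀ i, IsEssInf μ (ψ i '' admissible m Q X) (i.elim K KΓ) := by
    rintro (_ | h) <;> rw [image_admissible]
    exacts [hK, hKΓ h]
  obtain ⟨ξs, hξs, hconv⟩ := exists_seq_antitone_tendsto_of_isEssInf (A := admissible m Q X)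
    ⟨X, hX, EventuallyLE.refl _ _⟩ (directedOn_admissible hm hreg hπbdd) ψ hψ_mono hψ_meas hJ
  exact ⟨ξs, hξs, hconv none, fun h => hconv (some h)⟩

/-- Given countably many finite partitions `Γ(h)` and `Q ≪ P`, there exists a
single admissible minimizing sequence `ξ_k`: `π (ξ_k) ↓ K(X,Q)` a.s. and
simultaneously `π^{Γ(h)} (ξ_k) ↓ K^{Γ(h)}(X,Q)` a.s. for every `h`. -/
theorem common_minimizing_sequence
    {Ω : Type*} [F : MeasurableSpace Ω] (μ : Measure Ω) [IsProbabilityMeasure μ]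
    (m : MeasurableSpace Ω) (hm : m ≤ F)
    (π : (Ω → ℝ) → Ω → ℝ) (hreg : Regular F m μ π)
    (hπbdd : ∀ ξ : Ω → ℝ, IsBddMeas F ξ → IsBddMeas m (π ξ))
    (Q : @Measure Ω F) [IsProbabilityMeasure Q] (hQ : Q ≪ μ)
    (X : Ω → ℝ) (hX : IsBddMeas F X)
    (Γ : ℕ → Finset (Set Ω)) (hΓ : ∀ h, IsPartition m (Γ h))
    (K : Ω → ℝ)
    (hK : IsEssInf μ
      {g | ∃ ξ : Ω → ℝ, IsBddMeas F ξ ∧ (Q[X|m] ≤ᵐ[Q] Q[ξ|m]) ∧ g = π ξ} K)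
    (KΓ : ℕ → Ω → ℝ)
    (hKΓ : ∀ h : ℕ, IsEssInf μ
      {g | ∃ ξ : Ω → ℝ, IsBddMeas F ξ ∧ (Q[X|m] ≤ᵐ[Q] Q[ξ|m]) ∧
        g = partApprox μ (Γ h) (π ξ)} (KΓ h)) :
    ∃ ξs : ℕ → Ω → ℝ,
      (∀ k, IsBddMeas F (ξs k) ∧ (Q[X|m] ≤ᵐ[Q] Q[ξs k|m])) ∧
      (∀ᵐ ω ∂μ, Antitone (fun k => π (ξs k) ω) ∧
        Tendsto (fun k => π (ξs k) ω) atTop (nhds (K ω))) ∧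
      (∀ h : ℕ, ∀ᵐ ω ∂μ, Antitone (fun k => partApprox μ (Γ h) (π (ξs k)) ω) ∧
        Tendsto (fun k => partApprox μ (Γ h) (π (ξs k)) ω) atTop (nhds (KΓ h ω))) :=
  common_minimizing_sequence_general (F := F) μ m hm π hreg hπbdd Q X hX Γ hΓ K hK KΓ hKΓ

end
end

section
/- Let Q ≪ P be a probability measure on (Ω, F) with Q ∼ P on the sub-σ-algebra G, and define Q̃ by Q̃(F) := E_Q[ E_Q[dP/dQ | G] · 1_F ] for F ∈ F. Then Q̃ is a probability measure with Q̃ = P on G, and E_{Q̃}[X | G] = E_Q[X | G] a.s. for every bounded F-measurable X. -/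
open MeasureTheory Filter Set

noncomputable section

/-- The measure with density `f` with respect to `ν`. -/
def densMeasure {Ω : Type*} {F : MeasurableSpace Ω} (ν : @Measure Ω F)
    (f : Ω → ℝ) : @Measure Ω F :=
  ν.withDensity fun ω => ENNReal.ofReal (f ω)

open scoped ENNReal

/-! On a `G`-measurable set `A`, `Q̃ A = ∫_A Z dQ = P A`. For conditional expectations, `Z` is
`G`-measurable, so it can be pulled out: `E_Q[Z X | G] = Z E_Q[X | G]`. Hence `E_Q[X | G]` has the
same `Q̃`-integrals as `X` over every `G`-measurable set, and is therefore `E_{Q̃}[X | G]`,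
`Q̃`-a.s., hence `Q`-a.s. because `Z > 0`. -/

namespace densMeasure

variable {Ω : Type*} {m mΩ : MeasurableSpace Ω} {ν : Measure Ω} {Z : Ω → ℝ}

lemma eq_withDensity_toNNReal :
    densMeasure ν Z = ν.withDensity fun ω => ((Z ω).toNNReal : ℝ≥0∞) := rfl

lemma absolutelyContinuous (hZ : AEMeasurable Z ν) (hZpos : ∀ᵐ ω ∂ν, 0 < Z ω) :
    ν ≪ densMeasure ν Z :=
  withDensity_absolutelyContinuous' hZ.ennreal_ofReal
    (hZpos.mono fun _ h => (ENNReal.ofReal_pos.mpr h).ne')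

lemma apply_eq_ofReal_setIntegral (hZnn : 0 ≤ᵐ[ν] Z) {s : Set Ω} (hs : MeasurableSet s)
    (hZs : IntegrableOn Z s ν) :
    densMeasure ν Z s = ENNReal.ofReal (∫ ω in s, Z ω ∂ν) := by
  rw [densMeasure, withDensity_apply _ hs,
    ofReal_integral_eq_lintegral_ofReal hZs (ae_restrict_of_ae hZnn)]

lemma setIntegral_eq (hZ : Measurable Z) (hZnn : 0 ≤ᵐ[ν] Z) (g : Ω → ℝ) {s : Set Ω}
    (hs : MeasurableSet s) :
    ∫ ω in s, g ω ∂densMeasure ν Z = ∫ ω in s, Z ω * g ω ∂ν := by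
  rw [eq_withDensity_toNNReal, setIntegral_withDensity_eq_setIntegral_smul hZ.real_toNNReal g hs]
  refine integral_congr_ae (ae_restrict_of_ae ?_)
  filter_upwards [hZnn] with ω hω
  rw [NNReal.smul_def, Real.coe_toNNReal (Z ω) hω]
  rfl

lemma integrable_iff (hZ : Measurable Z) (hZnn : 0 ≤ᵐ[ν] Z) {g : Ω → ℝ} :
    Integrable g (densMeasure ν Z) ↔ Integrable (Z * g) ν := by
  rw [eq_withDensity_toNNReal, integrable_withDensity_iff_integrable_coe_smul hZ.real_toNNReal]
  refine integrable_congr ?_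
  filter_upwards [hZnn] with ω hω
  rw [Real.coe_toNNReal (Z ω) hω]
  rfl

theorem condExp_ae_eq (hm : m ≤ mΩ) [SigmaFinite (ν.trim hm)]
    [SigmaFinite ((densMeasure ν Z).trim hm)] (hZm : StronglyMeasurable[m] Z)
    (hZnn : 0 ≤ᵐ[ν] Z) {X : Ω → ℝ} (hX : Integrable X ν) (hZX : Integrable (Z * X) ν) :
    (densMeasure ν Z)[X|m] =ᵐ[densMeasure ν Z] ν[X|m] := by
  have hZ : Measurable Z := (hZm.mono hm).measurable
  have pull_out : ν[Z * X|m] =ᵐ[ν] Z * ν[X|m] :=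
    condExp_mul_of_stronglyMeasurable_left hZm hZX hX
  have hZY : Integrable (Z * ν[X|m]) ν := integrable_condExp.congr pull_out
  refine (ae_eq_condExp_of_forall_setIntegral_eq hm ((integrable_iff hZ hZnn).2 hZX)
    (fun s _ _ => ((integrable_iff hZ hZnn).2 hZY).integrableOn) (fun s hs _ => ?_)
    stronglyMeasurable_condExp.aestronglyMeasurable).symm
  calc ∫ ω in s, ν[X|m] ω ∂densMeasure ν Z
      = ∫ ω in s, (Z * ν[X|m]) ω ∂ν := setIntegral_eq hZ hZnn _ (hm s hs)
    _ = ∫ ω in s, ν[Z * X|m] ω ∂ν :=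
        setIntegral_congr_ae (hm s hs) (pull_out.symm.mono fun _ h _ => h)
    _ = ∫ ω in s, (Z * X) ω ∂ν := setIntegral_condExp hm hZX hs
    _ = ∫ ω in s, X ω ∂densMeasure ν Z := (setIntegral_eq hZ hZnn _ (hm s hs)).symm

end densMeasure

lemma IsBddMeas.integrable_mul_s19 {Ω : Type*} {mΩ : MeasurableSpace Ω} {μ : Measure Ω}
    {X Y : Ω → ℝ} (hX : IsBddMeas mΩ X) (hY : Integrable Y μ) : Integrable (Y * X) μ := by
  obtain ⟨hXm, C, hC⟩ := hX
  exact hY.mul_bdd hXm.aestronglyMeasurable (ae_of_all _ fun ω => hC ω)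

lemma IsBddMeas.integrable_s19 {Ω : Type*} {mΩ : MeasurableSpace Ω} {μ : Measure Ω}
    [IsFiniteMeasure μ] {X : Ω → ℝ} (hX : IsBddMeas mΩ X) : Integrable X μ := by
  obtain ⟨hXm, C, hC⟩ := hX
  exact .of_bound hXm.aestronglyMeasurable C (ae_of_all _ hC)

theorem rescaled_measure_preserves_condexp_general
    {Ω : Type*} [F : MeasurableSpace Ω] (μ : Measure Ω) [IsProbabilityMeasure μ]
    (m : MeasurableSpace Ω) (hm : m ≤ F)
    (ν : @Measure Ω F) [IsProbabilityMeasure ν]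
    (Z : Ω → ℝ) (hZm : Measurable[m] Z) (hZpos : ∀ᵐ ω ∂ν, 0 < Z ω)
    (hZdens : ∀ A : Set Ω, MeasurableSet[m] A →
      (∫ ω in A, Z ω ∂ν) = (μ A).toReal) :
    IsProbabilityMeasure (densMeasure ν Z) ∧
    (∀ A : Set Ω, MeasurableSet[m] A → densMeasure ν Z A = μ A) ∧
    (∀ X : Ω → ℝ, IsBddMeas F X →
      (densMeasure ν Z)[X|m] =ᵐ[ν] ν[X|m]) := by
  have hZnn : 0 ≤ᵐ[ν] Z := hZpos.mono fun _ h => h.le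
  have hZint : Integrable Z ν := by
    by_contra h
    simpa [integral_undef h] using hZdens univ .univ
  have agrees_on_m : ∀ A, MeasurableSet[m] A → densMeasure ν Z A = μ A := fun A hA => by
    rw [densMeasure.apply_eq_ofReal_setIntegral hZnn (hm A hA) hZint.integrableOn, hZdens A hA,
      ENNReal.ofReal_toReal (measure_ne_top μ A)]
  have hprob : IsProbabilityMeasure (densMeasure ν Z) :=
    ⟨by rw [agrees_on_m univ .univ, measure_univ]⟩
  refine ⟨hprob, agrees_on_m, fun X hX => ?_⟩
  have hZ : Measurable[F] Z := hZm.mono hm le_rfl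
  exact densMeasure.absolutelyContinuous hZ.aemeasurable hZpos |>.ae_le <|
    densMeasure.condExp_ae_eq hm hZm.stronglyMeasurable hZnn hX.integrable_s19
      (hX.integrable_mul_s19 hZint)

/-- Rescaling `Q` by the `G`-measurable density `Z = E_Q[dP/dQ | G]` of the
`P`-restriction to `G` w.r.t. the `Q`-restriction to `G` produces a
probability measure `Q̃` with `Q̃ = P` on `G` which leaves conditional
expectations given `G` unchanged: `E_{Q̃}[X|G] = E_Q[X|G]` a.s. -/
theorem rescaled_measure_preserves_condexp
    {Ω : Type*} [F : MeasurableSpace Ω] (μ : Measure Ω) [IsProbabilityMeasure μ]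
    (m : MeasurableSpace Ω) (hm : m ≤ F)
    (ν : @Measure Ω F) [IsProbabilityMeasure ν] (hν : ν ≪ μ)
    (hequiv : ∀ A : Set Ω, MeasurableSet[m] A → (ν A = 0 ↔ μ A = 0))
    (Z : Ω → ℝ) (hZm : Measurable[m] Z) (hZpos : ∀ᵐ ω ∂ν, 0 < Z ω)
    (hZdens : ∀ A : Set Ω, MeasurableSet[m] A →
      (∫ ω in A, Z ω ∂ν) = (μ A).toReal) :
    IsProbabilityMeasure (densMeasure ν Z) ∧
    (∀ A : Set Ω, MeasurableSet[m] A → densMeasure ν Z A = μ A) ∧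
    (∀ X : Ω → ℝ, IsBddMeas F X →
      (densMeasure ν Z)[X|m] =ᵐ[ν] ν[X|m]) :=
  rescaled_measure_preserves_condexp_general (F := F) μ m hm ν Z hZm hZpos hZdens
end
end
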